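/- arXiv:2110.03233 — 2 statements merged into one kernel-verified Lean document; each statement's English description precedes it below -/
import Mathlib

section
/- Proposition 2 (upper bound on the signalling robustness): For every two-party process matrix W on A_I ⊗ A_O ⊗ B_I ⊗ B_O, with dbar := max(d_{A_O}, d_{B_O}) ≥ 2, the signalling robustness satisfies R_s(W) ≤ dbar^2 - 1. -/
open scoped BigOperators ComplexOrder

/-- Trace-and-replace map `D_X` on the collection `S` of tensor factors:
`D_S(W) = (1/d_S) * (1_S ⊗ tr_S(W))`, written entrywise. -/
noncomputable def Dset {ι : Type} [Fintype ι] [DecidableEq ι] {F : ι → Type}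
    [∀ i, Fintype (F i)] [∀ i, DecidableEq (F i)]
    (S : Finset ι) (M : Matrix ((i : ι) → F i) ((i : ι) → F i) ℂ) :
    Matrix ((i : ι) → F i) ((i : ι) → F i) ℂ :=
  fun p q =>
    ((if ∀ i ∈ S, p i = q i then (1 : ℂ) else 0) / ∏ i ∈ S, (Fintype.card (F i) : ℂ)) *
      ((∑ r : (i : ι) → F i,
          M (fun i => if i ∈ S then r i else p i) (fun i => if i ∈ S then r i else q i)) /
        ∏ i ∈ Sᶜ, (Fintype.card (F i) : ℂ))

/-- Index of the two-party space `A_I ⊗ A_O ⊗ B_I ⊗ B_O`: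
slot `0 = A_I`, `1 = A_O`, `2 = B_I`, `3 = B_O`, with dimensions `d i`. -/
abbrev PIdx (d : Fin 4 → ℕ) : Type := (i : Fin 4) → Fin (d i)

abbrev PMat (d : Fin 4 → ℕ) : Type := Matrix (PIdx d) (PIdx d) ℂ

/-- The projector `L_V` onto the subspace of valid two-party process matrices. -/
noncomputable def LV {d : Fin 4 → ℕ} (W : PMat d) : PMat d :=
  Dset ({1} : Finset (Fin 4)) W + Dset ({3} : Finset (Fin 4)) W
    - Dset ({1, 3} : Finset (Fin 4)) W - Dset ({2, 3} : Finset (Fin 4)) W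
    + Dset ({1, 2, 3} : Finset (Fin 4)) W - Dset ({0, 1} : Finset (Fin 4)) W
    + Dset ({0, 1, 3} : Finset (Fin 4)) W

/-- Two-party process matrix: positive semidefinite, `L_V(W) = W`,
and `tr W = d_{A_O} * d_{B_O}`. -/
def IsProc {d : Fin 4 → ℕ} (W : PMat d) : Prop :=
  W.PosSemidef ∧ LV W = W ∧ W.trace = (d 1 : ℂ) * (d 3 : ℂ)

/-- Free (non-signalling) process matrix: a process matrix with `D_{A_O B_O}(W) = W`. -/
def IsFree {d : Fin 4 → ℕ} (W : PMat d) : Prop :=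
  IsProc W ∧ Dset ({1, 3} : Finset (Fin 4)) W = W

/-- Signalling robustness. -/
noncomputable def Rs {d : Fin 4 → ℕ} (W : PMat d) : ℝ :=
  sInf { s : ℝ | 0 ≤ s ∧ ∃ T C : PMat d, IsProc T ∧ IsFree C ∧
    W + (s : ℂ) • T = ((1 + s : ℝ) : ℂ) • C }

/-- Causal order `A ≺ B`: `D_{B_O}(W) = W` and `D_{B_O B_I}(W) = D_{B_O B_I A_O}(W)`. -/
def OrderedAB {d : Fin 4 → ℕ} (W : PMat d) : Prop :=
  Dset ({3} : Finset (Fin 4)) W = W ∧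
    Dset ({2, 3} : Finset (Fin 4)) W = Dset ({1, 2, 3} : Finset (Fin 4)) W

/-- Causal order `B ≺ A`: `D_{A_O}(W) = W` and `D_{A_O A_I}(W) = D_{A_O A_I B_O}(W)`. -/
def OrderedBA {d : Fin 4 → ℕ} (W : PMat d) : Prop :=
  Dset ({1} : Finset (Fin 4)) W = W ∧
    Dset ({0, 1} : Finset (Fin 4)) W = Dset ({0, 1, 3} : Finset (Fin 4)) W

/-!
Write `X, Y, Z` for `D_{A_O}(W), D_{B_O}(W), D_{A_O B_O}(W)`. The maps `D_S` are commuting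
projections with `D_S ∘ D_T = D_{S ∪ T}`, so `L_V(W) = W` forces `W = X + Y - Z`.

For `M ≥ 0` and any set `S` of factors, `d_S² D_S(M) ≥ M`: up to normalisation `D_S(M)` is
`∑_{r,t} E_{rt} M E_{rt}†` with `E_{rt} = |r⟩⟨t| ⊗ 1`, its terms with `r = t` form the pinching of
`M`, and pinching loses at most a factor `d_S`. Applying this to `W` on `B_O` and then again on
`A_O`, to `Y` on `A_O` and to `X` on `B_O`, a nonnegative combination of the results and of `Z` equals
`(d̄² - 1)(d̄² Z - W)`. Hence `W ≤ d̄² Z`, and since `Z` is free,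
`T = (d̄² Z - W)/(d̄² - 1)` is a process matrix with `W + (d̄² - 1) T = d̄² Z`.
-/

open Matrix Finset

theorem Finset.piecewise_piecewise_eq_union {ι : Type*} [DecidableEq ι] {π : ι → Sort*}
    (S T : Finset ι) (p r t : ∀ i, π i) :
    T.piecewise t (S.piecewise r p) = (S ∪ T).piecewise (T.piecewise t r) p := by
  ext i
  by_cases hT : i ∈ T <;> by_cases hS : i ∈ S <;> simp [piecewise, hS, hT]

theorem Matrix.PosSemidef.of_ofReal_smul {n : Type*} [Fintype n] {A : Matrix n n ℂ} {c : ℝ}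
    (hc : 0 < c) (h : ((c : ℂ) • A).PosSemidef) : A.PosSemidef := by
  have := h.smul (Complex.zero_le_real.mpr (inv_nonneg.mpr hc.le))
  rwa [smul_smul, ← Complex.ofReal_mul, inv_mul_cancel₀ hc.ne', Complex.ofReal_one,
    one_smul] at this

section TraceAndReplace

variable {ι : Type} {F : ι → Type} [∀ i, Fintype (F i)]

variable (F) in
def dimOn (S : Finset ι) : ℕ := ∏ i ∈ S, Fintype.card (F i)

theorem dimOn_pos [∀ i, Nonempty (F i)] (S : Finset ι) : 0 < dimOn F S :=
  prod_pos fun _ _ => Fintype.card_pos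

variable [Fintype ι] [DecidableEq ι] (S : Finset ι)

theorem dimOn_mul_dimOn_compl : dimOn F S * dimOn F Sᶜ = Fintype.card ((i : ι) → F i) := by
  rw [dimOn, dimOn, prod_mul_prod_compl, Fintype.card_pi]

theorem sum_sum_piecewise (f : ((i : ι) → F i) → ℂ) :
    ∑ r, ∑ t, f (S.piecewise t r) = Fintype.card ((i : ι) → F i) * ∑ u, f u := by
  have swap : Function.Involutive fun x : ((i : ι) → F i) × ((i : ι) → F i) =>
      (S.piecewise x.2 x.1, S.piecewise x.1 x.2) := fun x => by
    simp only [piecewise_idem_left, piecewise_idem_right]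
    exact Prod.ext (piecewise_same _ _) (piecewise_same _ _)
  rw [← Fintype.sum_prod_type',
    Fintype.sum_bijective _ swap.bijective _ (fun y => f y.1) fun _ => rfl,
    Fintype.sum_prod_type, mul_sum]
  simp [mul_comm]

variable [∀ i, DecidableEq (F i)] (M A B : Matrix ((i : ι) → F i) ((i : ι) → F i) ℂ)

theorem sum_ite_forall_mem_eq_dimOn_compl (u : (i : ι) → F i) :
    (∑ r : (i : ι) → F i, if ∀ i ∈ S, r i = u i then (1 : ℂ) else 0) = dimOn F Sᶜ := by
  have hfilter : ({r | ∀ i ∈ S, r i = u i} : Finset ((i : ι) → F i)) =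
      Fintype.piFinset fun i => if i ∈ S then {u i} else univ := by
    ext r
    simp only [mem_filter, mem_univ, true_and, Fintype.mem_piFinset]
    refine forall_congr' fun i => ?_
    split_ifs with h <;> simp [h]
  rw [sum_boole, hfilter, Fintype.card_piFinset, ← prod_mul_prod_compl S,
    prod_eq_one fun i hi => by simp [hi], one_mul, dimOn]
  exact congrArg _ (prod_congr rfl fun i hi => by simp [mem_compl.mp hi])

theorem Dset_apply (p q : (i : ι) → F i) :
    Dset S M p q = (if ∀ i ∈ S, p i = q i then 1 else 0) *
      (∑ r, M (S.piecewise r p) (S.piecewise r q)) / Fintype.card ((i : ι) → F i) := by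
  rw [← dimOn_mul_dimOn_compl S]
  unfold Dset dimOn Finset.piecewise
  push_cast
  ring

theorem Dset_add : Dset S (A + B) = Dset S A + Dset S B := by
  ext p q
  simp only [Dset_apply, Matrix.add_apply, sum_add_distrib]
  ring

theorem Dset_sub : Dset S (A - B) = Dset S A - Dset S B := by
  ext p q
  simp only [Dset_apply, Matrix.sub_apply, sum_sub_distrib]
  ring

theorem Dset_smul (c : ℂ) : Dset S (c • M) = c • Dset S M := by
  ext p q
  simp only [Dset_apply, Matrix.smul_apply, smul_eq_mul, ← mul_sum]
  ring

/-- `|r_S⟩⟨t_S| ⊗ 1_{Sᶜ}`. -/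
def matrixUnitOn (r t : (i : ι) → F i) : Matrix ((i : ι) → F i) ((i : ι) → F i) ℂ :=
  of fun u v => if (∀ i ∈ S, u i = r i) ∧ v = S.piecewise t u then 1 else 0

theorem matrixUnitOn_mul_mul_conjTranspose_apply (r t u v : (i : ι) → F i) :
    (matrixUnitOn S r t * M * (matrixUnitOn S r t)ᴴ) u v =
      (if ∀ i ∈ S, u i = r i then 1 else 0) * (if ∀ i ∈ S, v i = r i then 1 else 0) *
        M (S.piecewise t u) (S.piecewise t v) := by
  simp only [matrixUnitOn, Matrix.mul_apply, conjTranspose_apply, of_apply, ite_and]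
  split_ifs <;> simp [*]

theorem sum_matrixUnitOn_self :
    ∑ a, matrixUnitOn S a a =
      (dimOn F Sᶜ : ℂ) • (1 : Matrix ((i : ι) → F i) ((i : ι) → F i) ℂ) := by
  ext u v
  have h : ∀ a : (i : ι) → F i, matrixUnitOn S a a u v =
      (if v = u then 1 else 0) * if ∀ i ∈ S, a i = u i then 1 else 0 := by
    intro a
    by_cases hu : ∀ i ∈ S, u i = a i
    · have hu' : ∀ i ∈ S, a i = u i := fun i hi => (hu i hi).symm
      have hpw : S.piecewise a u = u :=
        (S.piecewise_congr hu' fun _ _ => rfl).trans (piecewise_same _ _)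
      simp only [matrixUnitOn, of_apply, hpw, and_iff_right hu, if_pos hu', mul_one]
    · have hu' : ¬ ∀ i ∈ S, a i = u i := fun h => hu fun i hi => (h i hi).symm
      simp [matrixUnitOn, hu, hu']
  simp only [Matrix.sum_apply, h, ← mul_sum, sum_ite_forall_mem_eq_dimOn_compl,
    Matrix.smul_apply, one_apply, smul_eq_mul]
  by_cases huv : u = v
  · simp [huv]
  · simp [huv, Ne.symm huv]

/-- Since `a` runs over all indices, not only over those of `S`, each block of the pinching is
counted `dimOn F Sᶜ` times. -/
def pinching : Matrix ((i : ι) → F i) ((i : ι) → F i) ℂ :=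
  ∑ a, matrixUnitOn S a a * M * (matrixUnitOn S a a)ᴴ

variable {M}

theorem Matrix.PosSemidef.card_smul_pinching_sub (hM : M.PosSemidef) :
    ((Fintype.card ((i : ι) → F i) : ℂ) • pinching S M - (dimOn F Sᶜ : ℂ) ^ 2 • M).PosSemidef := by
  set P := fun a : (i : ι) → F i => matrixUnitOn S a a
  have hcross : ∑ a, ∑ c, P a * M * (P c)ᴴ = (dimOn F Sᶜ : ℂ) ^ 2 • M := by
    calc ∑ a, ∑ c, P a * M * (P c)ᴴ = (∑ a, P a) * M * (∑ c, P c)ᴴ := by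
          simp only [conjTranspose_sum, sum_mul, mul_sum]
          exact sum_comm
      _ = (dimOn F Sᶜ : ℂ) ^ 2 • M := by
          rw [sum_matrixUnitOn_self]
          simp [sq, smul_smul]
  have hconst : ∀ f : ((i : ι) → F i) → Matrix ((i : ι) → F i) ((i : ι) → F i) ℂ,
      ∑ _a : (i : ι) → F i, ∑ c, f c = (Fintype.card ((i : ι) → F i) : ℂ) • ∑ c, f c :=
    fun f => by rw [sum_const, card_univ, Nat.cast_smul_eq_nsmul]
  have hexpand : ∑ a, ∑ c, (P a - P c) * M * (P a - P c)ᴴ =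
      (2 : ℂ) • ((Fintype.card ((i : ι) → F i) : ℂ) • pinching S M -
        (dimOn F Sᶜ : ℂ) ^ 2 • M) := by
    simp only [conjTranspose_sub, sub_mul, mul_sub, sum_sub_distrib]
    rw [sum_comm (f := fun a c => P a * M * (P a)ᴴ), hconst, hcross,
      sum_comm (f := fun a c => P c * M * (P a)ᴴ), hcross, pinching]
    module
  refine .of_ofReal_smul two_pos ?_
  rw [Complex.ofReal_ofNat, ← hexpand]
  exact posSemidef_sum _ fun a _ => posSemidef_sum _ fun c _ => hM.mul_mul_conjTranspose_same _

theorem Matrix.PosSemidef.sum_conj_matrixUnitOn_sub_pinching (hM : M.PosSemidef) :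
    (∑ r, ∑ t, matrixUnitOn S r t * M * (matrixUnitOn S r t)ᴴ -
      (dimOn F Sᶜ : ℂ) • pinching S M).PosSemidef := by
  set E := fun r t : (i : ι) → F i => matrixUnitOn S r t * M * (matrixUnitOn S r t)ᴴ
  have hdiag : ∑ r, ∑ t, (if ∀ i ∈ S, r i = t i then E r t else 0) =
      (dimOn F Sᶜ : ℂ) • pinching S M := by
    rw [sum_comm, pinching, smul_sum]
    refine sum_congr rfl fun t _ => ?_
    have h : ∀ r, (if ∀ i ∈ S, r i = t i then E r t else 0) =
        (if ∀ i ∈ S, r i = t i then (1 : ℂ) else 0) • E t t := by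
      intro r
      split_ifs with hrt
      · have hE : matrixUnitOn S r t = matrixUnitOn S t t := by
          ext u v
          exact if_congr (and_congr (forall₂_congr fun i hi => by rw [hrt i hi]) Iff.rfl) rfl rfl
        simp only [E, hE, one_smul]
      · rw [zero_smul]
    simp only [h, ← sum_smul, sum_ite_forall_mem_eq_dimOn_compl]
    rfl
  have hoff : ∑ r, ∑ t, E r t - (dimOn F Sᶜ : ℂ) • pinching S M =
      ∑ r, ∑ t, if ∀ i ∈ S, r i = t i then 0 else E r t := by
    rw [← hdiag, ← sum_sub_distrib]
    refine sum_congr rfl fun r _ => ?_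
    rw [← sum_sub_distrib]
    refine sum_congr rfl fun t _ => ?_
    split_ifs <;> simp
  rw [hoff]
  refine posSemidef_sum _ fun r _ => posSemidef_sum _ fun t _ => ?_
  split_ifs
  exacts [.zero, hM.mul_mul_conjTranspose_same _]

variable [∀ i, Nonempty (F i)] (M)

theorem Dset_Dset (T : Finset ι) : Dset S (Dset T M) = Dset (S ∪ T) M := by
  ext p q
  have hcond : ∀ r, (∀ i ∈ T, S.piecewise r p i = S.piecewise r q i) ↔
      ∀ i ∈ T, i ∉ S → p i = q i :=
    fun r => forall₂_congr fun i _ => by by_cases hi : i ∈ S <;> simp [hi]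
  simp only [Dset_apply, hcond, piecewise_piecewise_eq_union]
  by_cases h : ∀ i ∈ S ∪ T, p i = q i
  · have hS : ∀ i ∈ S, p i = q i := fun i hi => h i (mem_union_left T hi)
    have hT : ∀ i ∈ T, i ∉ S → p i = q i := fun i hi _ => h i (mem_union_right S hi)
    simp only [if_pos h, if_pos hS, if_pos hT, one_mul, ← sum_div]
    rw [sum_sum_piecewise T fun u => M ((S ∪ T).piecewise u p) ((S ∪ T).piecewise u q)]
    field_simp
  · rw [if_neg h, zero_mul, zero_div]
    by_cases hS : ∀ i ∈ S, p i = q i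
    · have hT : ¬ ∀ i ∈ T, i ∉ S → p i = q i := fun hT => h fun i hi =>
        (mem_union.mp hi).elim (hS i) fun hiT => if hiS : i ∈ S then hS i hiS else hT i hiT hiS
      simp [hT]
    · simp [hS]

theorem Dset_idem : Dset S (Dset S M) = Dset S M := by
  rw [Dset_Dset, union_self]

theorem Dset_insert (a : ι) : Dset (insert a S) M = Dset {a} (Dset S M) := by
  rw [Dset_Dset, insert_eq]

theorem Dset_singleton_comm (a b : ι) : Dset {a} (Dset {b} M) = Dset {b} (Dset {a} M) := by
  rw [Dset_Dset, Dset_Dset, union_comm]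

theorem trace_Dset : (Dset S M).trace = M.trace := by
  simp only [Matrix.trace, Matrix.diag, Dset_apply, forall₂_true_iff, if_true, one_mul, ← sum_div]
  rw [sum_sum_piecewise S fun u => M u u]
  field_simp

theorem sum_conj_matrixUnitOn :
    ∑ r, ∑ t, matrixUnitOn S r t * M * (matrixUnitOn S r t)ᴴ =
      ((Fintype.card ((i : ι) → F i) : ℂ) * dimOn F Sᶜ) • Dset S M := by
  ext u v
  have hsplit : ∀ r : (i : ι) → F i,
      (if ∀ i ∈ S, u i = r i then (1 : ℂ) else 0) * (if ∀ i ∈ S, v i = r i then 1 else 0) =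
        (if ∀ i ∈ S, u i = v i then 1 else 0) * (if ∀ i ∈ S, r i = u i then 1 else 0) := by
    intro r
    split_ifs <;> grind
  simp only [Matrix.sum_apply, matrixUnitOn_mul_mul_conjTranspose_apply, Matrix.smul_apply,
    smul_eq_mul, Dset_apply, hsplit]
  simp only [← mul_sum]
  rw [← sum_mul, ← mul_sum, sum_ite_forall_mem_eq_dimOn_compl]
  field_simp

variable {M}

theorem posSemidef_Dset (hM : M.PosSemidef) : (Dset S M).PosSemidef := by
  have hpos : (0 : ℝ) < Fintype.card ((i : ι) → F i) * dimOn F Sᶜ := by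
    have := dimOn_pos (F := F) Sᶜ
    positivity
  refine .of_ofReal_smul hpos ?_
  push_cast
  rw [← sum_conj_matrixUnitOn]
  exact posSemidef_sum _ fun r _ => posSemidef_sum _ fun t _ => hM.mul_mul_conjTranspose_same _

theorem Matrix.PosSemidef.dimOn_sq_smul_Dset_sub (hM : M.PosSemidef) :
    ((dimOn F S : ℂ) ^ 2 • Dset S M - M).PosSemidef := by
  have hA := hM.card_smul_pinching_sub S
  have hB := hM.sum_conj_matrixUnitOn_sub_pinching S
  rw [sum_conj_matrixUnitOn] at hB
  have hcard : (Fintype.card ((i : ι) → F i) : ℂ) = dimOn F S * dimOn F Sᶜ := by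
    exact_mod_cast (dimOn_mul_dimOn_compl S).symm
  have hpos : (0 : ℝ) < (dimOn F Sᶜ : ℝ) ^ 2 := by
    have := dimOn_pos (F := F) Sᶜ
    positivity
  refine .of_ofReal_smul hpos ?_
  convert (hB.smul (Nat.cast_nonneg (α := ℂ) (dimOn F S))).add hA using 1
  rw [hcard]
  push_cast
  module

end TraceAndReplace

section TwoParty

variable {d : Fin 4 → ℕ}

theorem LV_sub (A B : PMat d) : LV (A - B) = LV A - LV B := by
  simp only [LV, Dset_sub]
  abel

theorem LV_smul (c : ℂ) (A : PMat d) : LV (c • A) = c • LV A := by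
  simp only [LV, Dset_smul, smul_sub, smul_add]

theorem Rs_le_of_posSemidef_smul_sub {W C : PMat d} (hW : IsProc W) (hC : IsFree C) {l : ℝ}
    (hl : 1 < l) (h : ((l : ℂ) • C - W).PosSemidef) : Rs W ≤ l - 1 := by
  have hl' : l - 1 ≠ 0 := by linarith
  refine csInf_le ⟨0, fun s hs => hs.1⟩ ⟨by linarith, (((l - 1)⁻¹ : ℝ) : ℂ) • ((l : ℂ) • C - W),
    C, ⟨?_, ?_, ?_⟩, hC, ?_⟩
  · exact h.smul (Complex.zero_le_real.mpr (inv_nonneg.mpr (by linarith)))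
  · rw [LV_smul, LV_sub, LV_smul, hC.1.2.1, hW.2.1]
  · rw [trace_smul, trace_sub, trace_smul, hC.1.2.2, hW.2.2, smul_eq_mul, smul_eq_mul]
    have hlC : ((l - 1 : ℝ) : ℂ) ≠ 0 := Complex.ofReal_ne_zero.mpr hl'
    push_cast at hlC ⊢
    field_simp
  · rw [smul_smul, ← Complex.ofReal_mul, mul_inv_cancel₀ hl', Complex.ofReal_one, one_smul]
    push_cast
    module

variable [∀ i, Nonempty (Fin (d i))]

theorem LV_Dset_outputs (M : PMat d) : LV (Dset {1, 3} M) = Dset {1, 3} M := by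
  simp only [LV, Dset_insert, Dset_singleton_comm, Dset_idem]
  abel

theorem IsProc.isFree_Dset_outputs {W : PMat d} (hW : IsProc W) : IsFree (Dset {1, 3} W) :=
  ⟨⟨posSemidef_Dset _ hW.1, LV_Dset_outputs W, by rw [trace_Dset, hW.2.2]⟩, Dset_idem _ _⟩

theorem eq_Dset_add_Dset_sub_Dset_of_LV_eq {W : PMat d} (h : LV W = W) :
    W = Dset {1} W + Dset {3} W - Dset {1, 3} W :=
  calc W = Dset {1} (LV W) + Dset {3} (LV W) - Dset {1, 3} (LV W) := by
        conv_lhs => rw [← h]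
        simp only [LV, Dset_add, Dset_sub, Dset_insert, Dset_singleton_comm, Dset_idem]
        abel
    _ = Dset {1} W + Dset {3} W - Dset {1, 3} W := by rw [h]

theorem posSemidef_sq_smul_Dset_outputs_sub {W : PMat d} (hW : W.PosSemidef) (hLV : LV W = W)
    {m : ℝ} (h1 : (d 1 : ℝ) ≤ m) (h3 : (d 3 : ℝ) ≤ m) (hm : 1 < m) :
    (((m ^ 2 : ℝ) : ℂ) • Dset {1, 3} W - W).PosSemidef := by
  have hdim1 : (dimOn (fun i => Fin (d i)) {1} : ℂ) = d 1 := by simp [dimOn]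
  have hdim3 : (dimOn (fun i => Fin (d i)) {3} : ℂ) = d 3 := by simp [dimOn]
  have hXYZ := eq_Dset_add_Dset_sub_Dset_of_LV_eq hLV
  have hWAB := (hW.dimOn_sq_smul_Dset_sub {3}).dimOn_sq_smul_Dset_sub {1}
  have hY := (posSemidef_Dset {3} hW).dimOn_sq_smul_Dset_sub {1}
  have hX := (posSemidef_Dset {1} hW).dimOn_sq_smul_Dset_sub {3}
  have hZ := posSemidef_Dset {1, 3} hW
  simp only [hdim1, hdim3, Dset_sub, Dset_smul, Dset_insert, Dset_singleton_comm]
    at hXYZ hWAB hY hX hZ ⊢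
  have hc1 : (0 : ℂ) ≤ ((m ^ 2 - d 3 ^ 2 : ℝ) : ℂ) := Complex.zero_le_real.mpr (by nlinarith)
  have hc3 : (0 : ℂ) ≤ ((m ^ 2 - d 1 ^ 2 : ℝ) : ℂ) := Complex.zero_le_real.mpr (by nlinarith)
  refine .of_ofReal_smul (c := m ^ 2 - 1) (by nlinarith) ?_
  -- `(m² - 1)(m² Z - W) = hWAB + (m² - d_B²) hY + (m² - d_A²) hX + (m² - d_A²)(m² - d_B²) Z`
  -- once `W = X + Y - Z` is substituted
  convert hWAB.add ((hY.smul hc1).add ((hX.smul hc3).add (hZ.smul (mul_nonneg hc1 hc3))))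
    using 1
  push_cast
  linear_combination (norm := module) -((m : ℂ) ^ 2) • hXYZ

end TwoParty

/-- Proposition 2: for every two-party process matrix `W`,
the signalling robustness satisfies `R_s(W) ≤ dbar^2 - 1`, `dbar = max(d_{A_O}, d_{B_O})`. -/
theorem prop2 {d : Fin 4 → ℕ} (hd : ∀ i, 0 < d i)
    (hbar : 2 ≤ max (d 1) (d 3))
    (W : PMat d) (hW : IsProc W) :
    Rs W ≤ (max (d 1) (d 3) : ℝ) ^ 2 - 1 := by
  have : ∀ i, Nonempty (Fin (d i)) := fun i => ⟨⟨0, hd i⟩⟩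
  have hm : (2 : ℝ) ≤ max (d 1 : ℝ) (d 3) := by exact_mod_cast hbar
  refine Rs_le_of_posSemidef_smul_sub hW hW.isFree_Dset_outputs (by nlinarith) ?_
  exact posSemidef_sq_smul_Dset_outputs_sub hW.1 hW.2.1 (le_max_left _ _) (le_max_right _ _)
    (by linarith)
end

section
/- Characterization of free process matrices as the non-signalling processes: For a Choi matrix M_A of a channel on party A (a positive semidefinite matrix on A_I ⊗ A_O with tr_{A_O}(M_A) = 1_{A_I}), define W ⋆ M_A := tr_{A_I A_O}[W * (M_A^T ⊗ 1_{B_I B_O})], a matrix on B_I ⊗ B_O; define W ⋆ M_B analogously for channel Choi matrices M_B on B_I ⊗ B_O. For every two-party process matrix W on A_I ⊗ A_O ⊗ B_I ⊗ B_O the following are equivalent: (i) W ⋆ M_A = W ⋆ M_A' for all channel Choi matrices M_A, M_A' on party A, and W ⋆ M_B = W ⋆ M_B' for all channel Choi matrices M_B, M_B' on party B; (ii) W = rho ⊗ 1_{A_O B_O} for some density matrix rho on A_I ⊗ B_I; (iii) D_{A_O B_O}(W) = W. -/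
/-!
Write `W ⋆ M_A` blockwise: for fixed indices of party B it is `tr (Vᵀ M_A)` for a block `V` of
`W`. Choi matrices of channels `α → β` are the positive matrices with `tr_β M = 1`; the maximally
mixed one, `1 / |β|`, lies in their relative interior, so a linear functional constant on them
kills every matrix with `tr_β Δ = 0`. Hence `M ↦ tr (Vᵀ M)` is constant on channels exactly when
`V = X ⊗ 1_β`. Applied to the blocks for both parties, (i) says `W = ρ ⊗ 1_{A_O B_O}`, and so does
(iii), because `D_{A_O B_O}(W) = tr_{A_O B_O}(W) / (d_{A_O} d_{B_O}) ⊗ 1_{A_O B_O}`. Such a `ρ`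
is a principal submatrix of `W`, hence positive, and `tr W = d_{A_O} d_{B_O}` normalises it.
-/

open scoped BigOperators ComplexOrder

/-- Build an index of the two-party space from its four components. -/
def mk4 {d : Fin 4 → ℕ} (hd : ∀ i, 0 < d i)
    (a : Fin (d 0)) (b : Fin (d 1)) (c : Fin (d 2)) (x : Fin (d 3)) : PIdx d :=
  Function.update (Function.update (Function.update (Function.update
    (fun i => ⟨0, hd i⟩) 0 a) 1 b) 2 c) 3 x

/-- Choi matrix of a channel on party `A` (from `A_I` to `A_O`). -/
def IsChoiA {d : Fin 4 → ℕ}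
    (M : Matrix (Fin (d 0) × Fin (d 1)) (Fin (d 0) × Fin (d 1)) ℂ) : Prop :=
  M.PosSemidef ∧ ∀ a a' : Fin (d 0),
    (∑ x : Fin (d 1), M (a, x) (a', x)) = if a = a' then 1 else 0

/-- Choi matrix of a channel on party `B` (from `B_I` to `B_O`). -/
def IsChoiB {d : Fin 4 → ℕ}
    (M : Matrix (Fin (d 2) × Fin (d 3)) (Fin (d 2) × Fin (d 3)) ℂ) : Prop :=
  M.PosSemidef ∧ ∀ b b' : Fin (d 2),
    (∑ x : Fin (d 3), M (b, x) (b', x)) = if b = b' then 1 else 0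

/-- `W ⋆ M_A = tr_{A_I A_O}[W * (M_A^T ⊗ 1_{B_I B_O})]`, a matrix on `B_I ⊗ B_O`. -/
noncomputable def linkA {d : Fin 4 → ℕ} (hd : ∀ i, 0 < d i) (W : PMat d)
    (M : Matrix (Fin (d 0) × Fin (d 1)) (Fin (d 0) × Fin (d 1)) ℂ) :
    Matrix (Fin (d 2) × Fin (d 3)) (Fin (d 2) × Fin (d 3)) ℂ :=
  fun b b' => ∑ a : Fin (d 0), ∑ x : Fin (d 1), ∑ a' : Fin (d 0), ∑ y : Fin (d 1),
    W (mk4 hd a x b.1 b.2) (mk4 hd a' y b'.1 b'.2) * M (a, x) (a', y)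

/-- `W ⋆ M_B = tr_{B_I B_O}[W * (M_B^T ⊗ 1_{A_I A_O})]`, a matrix on `A_I ⊗ A_O`. -/
noncomputable def linkB {d : Fin 4 → ℕ} (hd : ∀ i, 0 < d i) (W : PMat d)
    (M : Matrix (Fin (d 2) × Fin (d 3)) (Fin (d 2) × Fin (d 3)) ℂ) :
    Matrix (Fin (d 0) × Fin (d 1)) (Fin (d 0) × Fin (d 1)) ℂ :=
  fun a a' => ∑ b : Fin (d 2), ∑ x : Fin (d 3), ∑ b' : Fin (d 2), ∑ y : Fin (d 3),
    W (mk4 hd a.1 a.2 b x) (mk4 hd a'.1 a'.2 b' y) * M (b, x) (b', y)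

open scoped Kronecker

namespace Matrix

variable {α β R : Type*}

lemma apply_eq_of_eq_kronecker_one [MulZeroOneClass R] [DecidableEq β]
    {V : Matrix (α × β) (α × β) R} {X : Matrix α α R} (h : V = X ⊗ₖ (1 : Matrix β β R))
    (a a' : α) (x y x₀ : β) :
    V (a, x) (a', y) = V (a, x₀) (a', x₀) * (1 : Matrix β β R) x y := by
  simp [h, kroneckerMap_apply]

section PartialTrace

variable [Fintype β]

def partialTraceSnd [Semiring R] : Matrix (α × β) (α × β) R →ₗ[R] Matrix α α R where
  toFun M := of fun a a' => ∑ x, M (a, x) (a', x)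
  map_add' M N := by ext; simp [Finset.sum_add_distrib]
  map_smul' c M := by ext; simp [Finset.mul_sum]

lemma partialTraceSnd_apply [Semiring R] (M : Matrix (α × β) (α × β) R) (a a' : α) :
    partialTraceSnd M a a' = ∑ x, M (a, x) (a', x) := rfl

lemma partialTraceSnd_conjTranspose [Semiring R] [StarRing R] (M : Matrix (α × β) (α × β) R) :
    partialTraceSnd Mᴴ = (partialTraceSnd M)ᴴ := by
  ext a a'
  simp [partialTraceSnd_apply, star_sum]

lemma partialTraceSnd_kronecker [CommSemiring R] (X : Matrix α α R) (Y : Matrix β β R) :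
    partialTraceSnd (X ⊗ₖ Y) = Y.trace • X := by
  ext a a'
  simp only [partialTraceSnd_apply, kroneckerMap_apply, smul_apply, smul_eq_mul, trace,
    diag_apply, Finset.sum_mul]
  exact Finset.sum_congr rfl fun _ _ => mul_comm _ _

lemma partialTraceSnd_single [CommSemiring R] [DecidableEq α] [DecidableEq β]
    (a a' : α) (x y : β) (c : R) :
    partialTraceSnd (single (a, x) (a', y) c) = (single x y (1 : R)).trace • single a a' c := by
  have h := partialTraceSnd_kronecker (single a a' c) (single x y (1 : R))
  rwa [single_kronecker_single, mul_one] at h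

end PartialTrace

section FrobeniusPairing

variable {m n : Type*} [Fintype m] [Fintype n] [CommSemiring R]

def frobeniusPairing (V : Matrix m n R) : Matrix m n R →ₗ[R] R where
  toFun M := ∑ p, ∑ q, V p q * M p q
  map_add' M N := by simp [mul_add, Finset.sum_add_distrib]
  map_smul' c M := by simp [Finset.mul_sum, mul_left_comm]

lemma frobeniusPairing_apply (V M : Matrix m n R) :
    frobeniusPairing V M = ∑ p, ∑ q, V p q * M p q := rfl

lemma frobeniusPairing_single [DecidableEq m] [DecidableEq n] (V : Matrix m n R) (i : m) (j : n)
    (c : R) : frobeniusPairing V (single i j c) = V i j * c := by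
  simp [frobeniusPairing_apply, single_apply, ite_and]

lemma frobeniusPairing_kronecker_one [Fintype α] [Fintype β] [DecidableEq β] (X : Matrix α α R)
    (M : Matrix (α × β) (α × β) R) :
    frobeniusPairing (X ⊗ₖ (1 : Matrix β β R)) M = frobeniusPairing X (partialTraceSnd M) := by
  simp only [frobeniusPairing_apply, partialTraceSnd_apply, kroneckerMap_apply, one_apply, mul_ite,
    mul_one, mul_zero, ite_mul, zero_mul, Fintype.sum_prod_type, Finset.sum_ite_eq,
    Finset.mem_univ, if_true, Finset.mul_sum]
  exact Finset.sum_congr rfl fun _ _ => Finset.sum_comm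

end FrobeniusPairing

open scoped Matrix.Norms.L2Operator MatrixOrder in
lemma IsHermitian.exists_posSemidef_smul_one_add [Fintype n] [DecidableEq n] {H : Matrix n n ℂ}
    (hH : H.IsHermitian) : ∃ r : ℝ, 0 ≤ r ∧ (r • 1 + H).PosSemidef := by
  refine ⟨‖H‖, norm_nonneg H, ?_⟩
  rw [← nonneg_iff_posSemidef, ← Algebra.algebraMap_eq_smul_one, ← neg_le_iff_add_nonneg']
  exact IsSelfAdjoint.neg_algebraMap_norm_le_self hH

end Matrix

open Matrix

section Choi

variable {α β : Type*} [Fintype β] [DecidableEq α] [DecidableEq β]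

def IsChoi (M : Matrix (α × β) (α × β) ℂ) : Prop :=
  M.PosSemidef ∧ partialTraceSnd M = 1

lemma isChoi_maximallyMixed [Nonempty β] :
    IsChoi ((Fintype.card β : ℝ)⁻¹ • (1 : Matrix (α × β) (α × β) ℂ)) := by
  refine ⟨PosSemidef.one.smul (by positivity), ?_⟩
  have hc : (((Fintype.card β : ℝ)⁻¹ : ℝ) : ℂ) * (Fintype.card β : ℂ) = 1 := by
    push_cast
    exact inv_mul_cancel₀ (by simp)
  rw [LinearMap.map_smul_of_tower, ← one_kronecker_one, partialTraceSnd_kronecker, trace_one,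
    ← Complex.coe_smul, smul_smul, hc, one_smul]

variable [Fintype α] [Nonempty β] (f : Matrix (α × β) (α × β) ℂ →ₗ[ℂ] ℂ)

lemma map_eq_zero_of_isHermitian_of_const_on_isChoi
    (hf : ∀ M M', IsChoi M → IsChoi M' → f M = f M') {H : Matrix (α × β) (α × β) ℂ}
    (hH : H.IsHermitian) (hH0 : partialTraceSnd H = 0) : f H = 0 := by
  obtain ⟨r, hr, hpos⟩ := hH.exists_posSemidef_smul_one_add
  set c : ℝ := (Fintype.card β : ℝ)⁻¹
  set t : ℝ := c / (r + 1)
  have ht : 0 < t := by positivity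
  have hM : IsChoi (c • (1 : Matrix (α × β) (α × β) ℂ) + t • H) := by
    have hsplit : c • (1 : Matrix (α × β) (α × β) ℂ) + t • H = t • ((r • 1 + H) + 1) := by
      rw [show c = t * (r + 1) from (div_mul_cancel₀ c (by positivity)).symm]
      module
    refine ⟨hsplit ▸ (hpos.add PosSemidef.one).smul ht.le, ?_⟩
    rw [map_add, LinearMap.map_smul_of_tower _ t, hH0, smul_zero, add_zero]
    exact isChoi_maximallyMixed.2
  have := hf _ _ hM isChoi_maximallyMixed
  rw [map_add, add_eq_left, LinearMap.map_smul_of_tower, smul_eq_zero] at this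
  exact this.resolve_left ht.ne'

lemma map_eq_zero_of_const_on_isChoi (hf : ∀ M M', IsChoi M → IsChoi M' → f M = f M')
    {Δ : Matrix (α × β) (α × β) ℂ} (hΔ : partialTraceSnd Δ = 0) : f Δ = 0 := by
  have hstar : partialTraceSnd (star Δ) = 0 := by
    rw [star_eq_conjTranspose, partialTraceSnd_conjTranspose, hΔ, conjTranspose_zero]
  have hre : f (realPart Δ) = 0 :=
    map_eq_zero_of_isHermitian_of_const_on_isChoi f hf (realPart Δ).2 (by
      rw [realPart_apply_coe, LinearMap.map_smul_of_tower, map_add, hΔ, hstar, add_zero,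
        smul_zero])
  have him : f (imaginaryPart Δ) = 0 :=
    map_eq_zero_of_isHermitian_of_const_on_isChoi f hf (imaginaryPart Δ).2 (by
      rw [imaginaryPart_apply_coe, map_smul, LinearMap.map_smul_of_tower, map_sub, hΔ, hstar,
        sub_zero, smul_zero, smul_zero])
  rw [← realPart_add_I_smul_imaginaryPart Δ, map_add, map_smul, hre, him, smul_zero, add_zero]

theorem frobeniusPairing_const_on_isChoi_iff (V : Matrix (α × β) (α × β) ℂ) :
    (∀ M M', IsChoi M → IsChoi M' → frobeniusPairing V M = frobeniusPairing V M') ↔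
      ∃ X : Matrix α α ℂ, V = X ⊗ₖ (1 : Matrix β β ℂ) := by
  constructor
  · intro hV
    obtain ⟨x₀⟩ := ‹Nonempty β›
    refine ⟨of fun a a' => V (a, x₀) (a', x₀), ?_⟩
    ext ⟨a, x⟩ ⟨a', y⟩
    have hΔ : partialTraceSnd (single (a, x) (a', y) (1 : ℂ)
        - (1 : Matrix β β ℂ) x y • single (a, x₀) (a', x₀) 1) = 0 := by
      rw [map_sub, map_smul, partialTraceSnd_single, partialTraceSnd_single]
      rcases eq_or_ne x y with rfl | hxy <;> simp [*]
    have := map_eq_zero_of_const_on_isChoi _ hV hΔ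
    rw [map_sub, map_smul, frobeniusPairing_single, frobeniusPairing_single, sub_eq_zero,
      mul_one, mul_one, smul_eq_mul] at this
    rw [this, kroneckerMap_apply, of_apply, mul_comm]
  · rintro ⟨X, rfl⟩ M M' hM hM'
    rw [frobeniusPairing_kronecker_one, frobeniusPairing_kronecker_one, hM.2, hM'.2]

end Choi

section TwoParty

variable {d : Fin 4 → ℕ}

@[simp] lemma mk4_apply_zero (hd : ∀ i, 0 < d i) (a b c x) : mk4 hd a b c x 0 = a := by
  simp [mk4]
@[simp] lemma mk4_apply_one (hd : ∀ i, 0 < d i) (a b c x) : mk4 hd a b c x 1 = b := by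
  simp [mk4]
@[simp] lemma mk4_apply_two (hd : ∀ i, 0 < d i) (a b c x) : mk4 hd a b c x 2 = c := by
  simp [mk4]
@[simp] lemma mk4_apply_three (hd : ∀ i, 0 < d i) (a b c x) : mk4 hd a b c x 3 = x := by
  simp [mk4]

lemma mk4_eta (hd : ∀ i, 0 < d i) (p : PIdx d) : mk4 hd (p 0) (p 1) (p 2) (p 3) = p := by
  funext i
  fin_cases i <;> simp

def inputsOutputsEquiv (hd : ∀ i, 0 < d i) :
    PIdx d ≃ (Fin (d 0) × Fin (d 2)) × (Fin (d 1) × Fin (d 3)) where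
  toFun p := ((p 0, p 2), (p 1, p 3))
  invFun u := mk4 hd u.1.1 u.2.1 u.1.2 u.2.2
  left_inv := mk4_eta hd
  right_inv u := by simp

lemma sum_pIdx (hd : ∀ i, 0 < d i) (g : PIdx d → ℂ) :
    ∑ p, g p = ∑ u : Fin (d 0) × Fin (d 2), ∑ o : Fin (d 1) × Fin (d 3),
      g (mk4 hd u.1 o.1 u.2 o.2) := by
  rw [← (inputsOutputsEquiv hd).symm.sum_comp, Fintype.sum_prod_type]
  rfl

def inputEmbedding (hd : ∀ i, 0 < d i) (u : Fin (d 0) × Fin (d 2)) : PIdx d :=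
  mk4 hd u.1 ⟨0, hd 1⟩ u.2 ⟨0, hd 3⟩

/- `tr_{A_O B_O}(W) / (d_{A_O} d_{B_O})`, a matrix on `A_I ⊗ B_I`. -/
noncomputable def normalizedTraceOutputs (hd : ∀ i, 0 < d i) (W : PMat d) :
    Matrix (Fin (d 0) × Fin (d 2)) (Fin (d 0) × Fin (d 2)) ℂ :=
  of fun u v => (∑ o : Fin (d 1) × Fin (d 3),
    W (mk4 hd u.1 o.1 u.2 o.2) (mk4 hd v.1 o.1 v.2 o.2)) / (d 1 * d 3)

def sliceA (hd : ∀ i, 0 < d i) (W : PMat d) (b b' : Fin (d 2) × Fin (d 3)) :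
    Matrix (Fin (d 0) × Fin (d 1)) (Fin (d 0) × Fin (d 1)) ℂ :=
  of fun p q => W (mk4 hd p.1 p.2 b.1 b.2) (mk4 hd q.1 q.2 b'.1 b'.2)

def sliceB (hd : ∀ i, 0 < d i) (W : PMat d) (a a' : Fin (d 0) × Fin (d 1)) :
    Matrix (Fin (d 2) × Fin (d 3)) (Fin (d 2) × Fin (d 3)) ℂ :=
  of fun p q => W (mk4 hd a.1 a.2 p.1 p.2) (mk4 hd a'.1 a'.2 q.1 q.2)

/- `W = ρ ⊗ 1_{A_O B_O}`, entrywise. -/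
def TensorOneOnOutputs (W : PMat d)
    (ρ : Matrix (Fin (d 0) × Fin (d 2)) (Fin (d 0) × Fin (d 2)) ℂ) : Prop :=
  ∀ p q : PIdx d, W p q = ρ (p 0, p 2) (q 0, q 2) * (if p 1 = q 1 ∧ p 3 = q 3 then 1 else 0)

namespace TensorOneOnOutputs

variable {W : PMat d} {ρ : Matrix (Fin (d 0) × Fin (d 2)) (Fin (d 0) × Fin (d 2)) ℂ}

lemma eq_submatrix (hd : ∀ i, 0 < d i) (h : TensorOneOnOutputs W ρ) :
    ρ = W.submatrix (inputEmbedding hd) (inputEmbedding hd) := by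
  ext u v
  simp [h _ _, inputEmbedding]

lemma trace_eq (hd : ∀ i, 0 < d i) (h : TensorOneOnOutputs W ρ) :
    W.trace = d 1 * d 3 * ρ.trace := by
  rw [Matrix.trace, sum_pIdx hd]
  simp [h _ _, Matrix.trace, Finset.mul_sum]

lemma normalizedTraceOutputs_eq (hd : ∀ i, 0 < d i) (h : TensorOneOnOutputs W ρ) :
    normalizedTraceOutputs hd W = ρ := by
  ext u v
  have h13 : (d 1 * d 3 : ℂ) ≠ 0 := by simp [(hd 1).ne', (hd 3).ne']
  simp only [normalizedTraceOutputs, of_apply, h _ _, mk4_apply_zero, mk4_apply_one,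
    mk4_apply_two, mk4_apply_three, and_self, if_true, mul_one, Finset.sum_const,
    Finset.card_univ, Fintype.card_prod, Fintype.card_fin, nsmul_eq_mul, Nat.cast_mul]
  exact mul_div_cancel_left₀ _ h13

lemma sliceA_eq (hd : ∀ i, 0 < d i) (h : TensorOneOnOutputs W ρ)
    (b b' : Fin (d 2) × Fin (d 3)) :
    sliceA hd W b b' =
      (of fun a a' => ρ (a, b.1) (a', b'.1) * if b.2 = b'.2 then 1 else 0) ⊗ₖ 1 := by
  ext ⟨a, x⟩ ⟨a', y⟩
  simp [sliceA, h _ _, kroneckerMap_apply, one_apply, ite_and]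

lemma sliceB_eq (hd : ∀ i, 0 < d i) (h : TensorOneOnOutputs W ρ)
    (a a' : Fin (d 0) × Fin (d 1)) :
    sliceB hd W a a' =
      (of fun b b' => ρ (a.1, b) (a'.1, b') * if a.2 = a'.2 then 1 else 0) ⊗ₖ 1 := by
  ext ⟨b, x⟩ ⟨b', y⟩
  simp only [sliceB, of_apply, h _ _, mk4_apply_zero, mk4_apply_one, mk4_apply_two,
    mk4_apply_three, kroneckerMap_apply, one_apply]
  split_ifs <;> simp_all

end TensorOneOnOutputs

lemma tensorOneOnOutputs_Dset (hd : ∀ i, 0 < d i) (W : PMat d) :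
    TensorOneOnOutputs (Dset ({1, 3} : Finset (Fin 4)) W) (normalizedTraceOutputs hd W) := by
  intro p q
  have hrepl : ∀ (u : Fin (d 0) × Fin (d 2)) (o : Fin (d 1) × Fin (d 3)) (p : PIdx d),
      (fun i => if i ∈ ({1, 3} : Finset (Fin 4)) then mk4 hd u.1 o.1 u.2 o.2 i else p i)
        = mk4 hd (p 0) o.1 (p 2) o.2 := by
    intro u o p
    funext i
    fin_cases i <;> simp
  have hcompl : ({1, 3} : Finset (Fin 4))ᶜ = {0, 2} := by decide
  have hcond : (∀ i ∈ ({1, 3} : Finset (Fin 4)), p i = q i) ↔ (p 1 = q 1 ∧ p 3 = q 3) := by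
    simp
  have h02 : (d 0 * d 2 : ℂ) ≠ 0 := by simp [(hd 0).ne', (hd 2).ne']
  simp only [Dset, sum_pIdx hd, hrepl, hcompl, hcond, Finset.sum_const, Finset.card_univ,
    Fintype.card_prod, Fintype.card_fin, nsmul_eq_mul, Nat.cast_mul, normalizedTraceOutputs,
    of_apply, Finset.prod_pair (by decide : (1 : Fin 4) ≠ 3),
    Finset.prod_pair (by decide : (0 : Fin 4) ≠ 2)]
  rw [mul_div_cancel_left₀ _ h02]
  ring

lemma Dset_outputs_eq_self_iff (hd : ∀ i, 0 < d i) (W : PMat d) :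
    Dset ({1, 3} : Finset (Fin 4)) W = W ↔ ∃ ρ, TensorOneOnOutputs W ρ := by
  constructor
  · intro h
    have := tensorOneOnOutputs_Dset hd W
    rw [h] at this
    exact ⟨_, this⟩
  · rintro ⟨ρ, h⟩
    ext p q
    rw [tensorOneOnOutputs_Dset hd W p q, h.normalizedTraceOutputs_eq hd, h p q]

lemma exists_density_tensorOneOnOutputs_iff (hd : ∀ i, 0 < d i) {W : PMat d}
    (hps : W.PosSemidef) (htr : W.trace = d 1 * d 3) :
    (∃ ρ, ρ.PosSemidef ∧ ρ.trace = 1 ∧ TensorOneOnOutputs W ρ) ↔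
      ∃ ρ, TensorOneOnOutputs W ρ := by
  refine ⟨fun ⟨ρ, _, _, h⟩ => ⟨ρ, h⟩, fun ⟨ρ, h⟩ => ⟨ρ, ?_, ?_, h⟩⟩
  · rw [h.eq_submatrix hd]
    exact hps.submatrix _
  · have h13 : (d 1 * d 3 : ℂ) ≠ 0 := by simp [(hd 1).ne', (hd 3).ne']
    rwa [h.trace_eq hd, mul_eq_left₀ h13] at htr

lemma linkA_apply (hd : ∀ i, 0 < d i) (W : PMat d)
    (M : Matrix (Fin (d 0) × Fin (d 1)) (Fin (d 0) × Fin (d 1)) ℂ)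
    (b b' : Fin (d 2) × Fin (d 3)) :
    linkA hd W M b b' = frobeniusPairing (sliceA hd W b b') M := by
  simp [linkA, sliceA, frobeniusPairing_apply, Fintype.sum_prod_type]

lemma linkB_apply (hd : ∀ i, 0 < d i) (W : PMat d)
    (M : Matrix (Fin (d 2) × Fin (d 3)) (Fin (d 2) × Fin (d 3)) ℂ)
    (a a' : Fin (d 0) × Fin (d 1)) :
    linkB hd W M a a' = frobeniusPairing (sliceB hd W a a') M := by
  simp [linkB, sliceB, frobeniusPairing_apply, Fintype.sum_prod_type]

lemma isChoiA_iff (M : Matrix (Fin (d 0) × Fin (d 1)) (Fin (d 0) × Fin (d 1)) ℂ) :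
    IsChoiA (d := d) M ↔ IsChoi M := by
  simp only [IsChoiA, IsChoi, ← Matrix.ext_iff, partialTraceSnd_apply, one_apply]

lemma isChoiB_iff (M : Matrix (Fin (d 2) × Fin (d 3)) (Fin (d 2) × Fin (d 3)) ℂ) :
    IsChoiB (d := d) M ↔ IsChoi M := by
  simp only [IsChoiB, IsChoi, ← Matrix.ext_iff, partialTraceSnd_apply, one_apply]

lemma linkA_const_iff (hd : ∀ i, 0 < d i) (W : PMat d) :
    (∀ MA MA', IsChoiA (d := d) MA → IsChoiA (d := d) MA' →
        linkA hd W MA = linkA hd W MA') ↔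
      ∀ b b', ∃ X, sliceA hd W b b' = X ⊗ₖ 1 := by
  have : Nonempty (Fin (d 1)) := ⟨⟨0, hd 1⟩⟩
  simp_rw [← frobeniusPairing_const_on_isChoi_iff]
  simp only [isChoiA_iff, ← Matrix.ext_iff, linkA_apply]
  exact ⟨fun h b b' M M' hM hM' => h M M' hM hM' b b',
    fun h M M' hM hM' b b' => h b b' M M' hM hM'⟩

lemma linkB_const_iff (hd : ∀ i, 0 < d i) (W : PMat d) :
    (∀ MB MB', IsChoiB (d := d) MB → IsChoiB (d := d) MB' →
        linkB hd W MB = linkB hd W MB') ↔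
      ∀ a a', ∃ Y, sliceB hd W a a' = Y ⊗ₖ 1 := by
  have : Nonempty (Fin (d 3)) := ⟨⟨0, hd 3⟩⟩
  simp_rw [← frobeniusPairing_const_on_isChoi_iff]
  simp only [isChoiB_iff, ← Matrix.ext_iff, linkB_apply]
  exact ⟨fun h a a' M M' hM hM' => h M M' hM hM' a a',
    fun h M M' hM hM' a a' => h a a' M M' hM hM'⟩

lemma tensorOneOnOutputs_of_slices (hd : ∀ i, 0 < d i) {W : PMat d}
    (hA : ∀ b b', ∃ X, sliceA hd W b b' = X ⊗ₖ 1)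
    (hB : ∀ a a', ∃ Y, sliceB hd W a a' = Y ⊗ₖ 1) :
    TensorOneOnOutputs W (W.submatrix (inputEmbedding hd) (inputEmbedding hd)) := by
  intro p q
  obtain ⟨X, hX⟩ := hA (p 2, p 3) (q 2, q 3)
  obtain ⟨Y, hY⟩ := hB (p 0, ⟨0, hd 1⟩) (q 0, ⟨0, hd 1⟩)
  have eA := apply_eq_of_eq_kronecker_one hX (p 0) (q 0) (p 1) (q 1) ⟨0, hd 1⟩
  have eB := apply_eq_of_eq_kronecker_one hY (p 2) (q 2) (p 3) (q 3) ⟨0, hd 3⟩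
  simp only [sliceA, sliceB, of_apply, mk4_eta] at eA eB
  rw [eA, eB]
  simp [inputEmbedding, one_apply, ite_and]

lemma tensorOneOnOutputs_iff_slices (hd : ∀ i, 0 < d i) {W : PMat d} :
    (∃ ρ, TensorOneOnOutputs W ρ) ↔
      (∀ b b', ∃ X, sliceA hd W b b' = X ⊗ₖ 1) ∧ ∀ a a', ∃ Y, sliceB hd W a a' = Y ⊗ₖ 1 :=
  ⟨fun ⟨_, h⟩ => ⟨fun b b' => ⟨_, h.sliceA_eq hd b b'⟩, fun a a' => ⟨_, h.sliceB_eq hd a a'⟩⟩,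
    fun ⟨hA, hB⟩ => ⟨_, tensorOneOnOutputs_of_slices hd hA hB⟩⟩

end TwoParty

/-- Characterization of free process matrices as the non-signalling processes:
(i) the reduced process seen by either party is independent of the other party's channel;
(ii) `W = ρ ⊗ 1_{A_O B_O}` for a density matrix `ρ` on `A_I ⊗ B_I`;
(iii) `D_{A_O B_O}(W) = W`. -/
theorem free_iff_nonsignalling {d : Fin 4 → ℕ} (hd : ∀ i, 0 < d i)
    (W : PMat d) (hW : IsProc W) :
    ((((∀ MA MA', IsChoiA (d := d) MA → IsChoiA (d := d) MA' →
          linkA hd W MA = linkA hd W MA') ∧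
        (∀ MB MB', IsChoiB (d := d) MB → IsChoiB (d := d) MB' →
          linkB hd W MB = linkB hd W MB')) ↔
      (∃ ρ : Matrix (Fin (d 0) × Fin (d 2)) (Fin (d 0) × Fin (d 2)) ℂ,
        ρ.PosSemidef ∧ ρ.trace = 1 ∧
        ∀ p q : PIdx d, W p q =
          ρ (p 0, p 2) (q 0, q 2) * (if p 1 = q 1 ∧ p 3 = q 3 then 1 else 0))) ∧
    ((∃ ρ : Matrix (Fin (d 0) × Fin (d 2)) (Fin (d 0) × Fin (d 2)) ℂ,
        ρ.PosSemidef ∧ ρ.trace = 1 ∧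
        ∀ p q : PIdx d, W p q =
          ρ (p 0, p 2) (q 0, q 2) * (if p 1 = q 1 ∧ p 3 = q 3 then 1 else 0)) ↔
      Dset ({1, 3} : Finset (Fin 4)) W = W)) := by
  obtain ⟨hps, -, htr⟩ := hW
  have hlinks := (linkA_const_iff hd W).and (linkB_const_iff hd W)
  rw [hlinks.trans (tensorOneOnOutputs_iff_slices hd).symm]
  exact ⟨(exists_density_tensorOneOnOutputs_iff hd hps htr).symm,
    (exists_density_tensorOneOnOutputs_iff hd hps htr).trans (Dset_outputs_eq_self_iff hd W).symm⟩
end
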